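/- arXiv:2509.19655 — 3 statements merged into one kernel-verified Lean document; each statement's English description precedes it below -/
import Mathlib

section
/- Let H be a 2-edge-connected subgraph of a 2-edge-connected graph G, let S be a 2-edge-connected spanning subgraph of H, and let S' be a 2-edge-connected spanning subgraph of G|H (the graph obtained by contracting V(H)). Then S ∪ S' (interpreting edges of S' as their corresponding edges in G) is a 2-edge-connected spanning subgraph of G. -/
/-- Reachability in a multigraph given by the endpoint map `ends`, using only
edges from the edge set `F`. -/
def MGReach {V E : Type*} (ends : E → Sym2 V) (F : Set E) (a b : V) : Prop :=
  Relation.ReflTransGen (fun x y => ∃ e ∈ F, ends e = s(x, y)) a b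

/-- The edge set `F` is a 2-edge-connected spanning subgraph on the vertex set `U`:
all its edges have both endpoints in `U`, it connects all of `U`, and it still
connects all of `U` after the removal of any single edge. -/
def MGTwoECOn {V E : Type*} (ends : E → Sym2 V) (U : Set V) (F : Set E) : Prop :=
  (∀ e ∈ F, ∀ x ∈ ends e, x ∈ U) ∧
  (∀ a ∈ U, ∀ b ∈ U, MGReach ends F a b) ∧
  ∀ e₀ ∈ F, ∀ a ∈ U, ∀ b ∈ U, MGReach ends (F \ {e₀}) a b

/-! Every `S'`-path of the contracted graph lifts to a path of `G` using edges of `S'`, except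
that each visit of the contracted vertex may enter and leave `V(H)` at different vertices;
those are joined inside `V(H)` by an `S`-path. Removing an edge `e₀` is handled the same way,
since `S \ {e₀}` still connects `V(H)` and `S' \ {e₀}` still connects `G|H`. -/

lemma Sym2.exists_eq_mk_of_map_eq_mk {α β : Type*} {f : α → β} {z : Sym2 α} {x y : β}
    (h : z.map f = s(x, y)) : ∃ p q, z = s(p, q) ∧ f p = x ∧ f q = y := by
  induction z using Sym2.ind with
  | _ p q =>
    rcases Sym2.eq_iff.mp h with ⟨hp, hq⟩ | ⟨hq, hp⟩
    · exact ⟨p, q, rfl, hp, hq⟩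
    · exact ⟨q, p, Sym2.eq_swap, hp, hq⟩

namespace MGReach

variable {V V' E : Type*} {ends : E → Sym2 V}

lemma mono {F F' : Set E} (hFF' : F ⊆ F') {a b : V} (h : MGReach ends F a b) :
    MGReach ends F' a b :=
  Relation.ReflTransGen.mono (fun _ _ ⟨e, he, hends⟩ => ⟨e, hFF' he, hends⟩) _ _ h

lemma of_map {U : Set V} {c : V → V'}
    (hc : ∀ u v : V, c u = c v → u = v ∨ (u ∈ U ∧ v ∈ U))
    {T : Set E} (hT : ∀ a ∈ U, ∀ b ∈ U, MGReach ends T a b)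
    {F : Set E} {a b : V} (h : MGReach (fun e => (ends e).map c) F (c a) (c b)) :
    MGReach ends (T ∪ F) a b := by
  have of_eq : ∀ u v, c u = c v → MGReach ends (T ∪ F) u v := fun u v huv => by
    rcases hc u v huv with rfl | ⟨hu, hv⟩
    · exact .refl
    · exact (hT u hu v hv).mono Set.subset_union_left
  suffices ∀ y, MGReach (fun e => (ends e).map c) F (c a) y →
      ∀ b, c b = y → MGReach ends (T ∪ F) a b from this _ h b rfl
  intro y hy
  induction hy with
  | refl => exact fun b hb => of_eq a b hb.symm
  | tail _ hstep ih =>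
    intro b hb
    obtain ⟨e, he, hmap⟩ := hstep
    obtain ⟨p, q, hpq, rfl, hq⟩ := Sym2.exists_eq_mk_of_map_eq_mk hmap
    exact ((ih p rfl).tail ⟨e, Or.inr he, hpq⟩).trans (of_eq q b (hq.trans hb.symm))

end MGReach

lemma MGTwoECOn.reach_diff {V E : Type*} {ends : E → Sym2 V} {U : Set V} {F : Set E}
    (hF : MGTwoECOn ends U F) (e₀ : E) : ∀ a ∈ U, ∀ b ∈ U, MGReach ends (F \ {e₀}) a b := by
  by_cases he₀ : e₀ ∈ F
  · exact hF.2.2 e₀ he₀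
  · simpa only [Set.sdiff_singleton_eq_self he₀] using hF.2.1

theorem glue_contracted_solution_general
    {V V' E : Type*} (ends : E → Sym2 V)
    (VH : Set V)
    (S : Set E) (hS : MGTwoECOn ends VH S)
    (c : V → V')
    (hinj : ∀ u v : V, c u = c v → u = v ∨ (u ∈ VH ∧ v ∈ VH))
    (S' : Set E)
    (hS' : MGTwoECOn (fun e => Sym2.map c (ends e)) Set.univ S') :
    MGTwoECOn ends Set.univ (S ∪ S') := by
  refine ⟨fun _ _ _ _ => trivial, fun a _ b _ => ?_, fun e₀ _ a _ b _ => ?_⟩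
  · exact MGReach.of_map hinj hS.2.1 (hS'.2.1 (c a) trivial (c b) trivial)
  · rw [Set.union_sdiff_distrib]
    exact MGReach.of_map hinj (hS.reach_diff e₀) (hS'.reach_diff e₀ (c a) trivial (c b) trivial)

/-- Let `H` (with vertex set `VH` and edge set `FH`) be a 2-edge-connected subgraph of a
2-edge-connected graph `G`, let `S` be a 2-edge-connected spanning subgraph of `H`, and
let `S'` be a 2-edge-connected spanning subgraph of `G|H`, the graph obtained by
contracting `V(H)` (described by the vertex map `c` identifying exactly the vertices
of `VH`; the edges of `G|H` are in one-to-one correspondence with those of `G`).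
Then `S ∪ S'` (interpreting the edges of `S'` as the corresponding edges of `G`) is a
2-edge-connected spanning subgraph of `G`. -/
theorem glue_contracted_solution
    {V V' E : Type*} (ends : E → Sym2 V)
    (hG : MGTwoECOn ends Set.univ Set.univ)
    (VH : Set V) (FH : Set E) (hH : MGTwoECOn ends VH FH)
    (S : Set E) (hSsub : S ⊆ FH) (hS : MGTwoECOn ends VH S)
    (c : V → V') (hsurj : Function.Surjective c)
    (hconst : ∀ u ∈ VH, ∀ v ∈ VH, c u = c v)
    (hinj : ∀ u v : V, c u = c v → u = v ∨ (u ∈ VH ∧ v ∈ VH))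
    (S' : Set E)
    (hS' : MGTwoECOn (fun e => Sym2.map c (ends e)) Set.univ S') :
    MGTwoECOn ends Set.univ (S ∪ S') :=
  glue_contracted_solution_general ends VH S hS c hinj S' hS'
end

section
/- Let G be a 2-edge-connected graph, let v be a cut vertex of G, and let (V1, V2) be a partition of V(G) \ {v} with V1 and V2 nonempty such that there are no edges between V1 and V2 in G. Then the minimum number of edges of a 2-edge-connected spanning subgraph of G equals the sum of the minimum numbers of edges of 2-edge-connected spanning subgraphs of G[V1 ∪ {v}] and G[V2 ∪ {v}]. -/
/-!
Every edge of `G` lies on one side of `v`, so a 2-edge-connected spanning subgraph of `G` is the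
disjoint union of its two sides. Each side is again 2-edge-connected: a walk between two vertices
of one side that strays to the other side leaves and re-enters through `v`, so it can be
shortcut. Conversely, two 2-edge-connected spanning subgraphs of the sides glued at `v` form one
of `G`, since deleting an edge leaves both sides connected and they still meet at `v`.
-/

variable {V : Type*}

/-- Reachability between vertices using only edges from the edge set `F`. -/
def ReachE (F : Set (Sym2 V)) (a b : V) : Prop :=
  Relation.ReflTransGen (fun x y => s(x, y) ∈ F) a b

/-- `F` is (the edge set of) a 2-edge-connected spanning subgraph of the subgraph of `G`
induced on the vertex set `U`: its edges are edges of `G` lying inside `U`, it connects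
all of `U`, and it keeps connecting all of `U` after removal of any single edge. -/
def TwoECWithin (G : SimpleGraph V) (U : Set V) (F : Set (Sym2 V)) : Prop :=
  F ⊆ G.edgeSet ∧ (∀ e ∈ F, ∀ x ∈ e, x ∈ U) ∧
    (∀ a ∈ U, ∀ b ∈ U, ReachE F a b) ∧
    ∀ e ∈ F, ∀ a ∈ U, ∀ b ∈ U, ReachE (F \ {e}) a b

/-- `optOn G U` is the minimum number of edges of a 2-edge-connected spanning subgraph
of the subgraph of `G` induced on `U`. -/
noncomputable def optOn (G : SimpleGraph V) (U : Set V) : ℕ :=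
  sInf {n | ∃ F : Set (Sym2 V), TwoECWithin G U F ∧ F.ncard = n}

lemma Set.mem_sym2_iff_forall {U : Set V} {e : Sym2 V} : e ∈ U.sym2 ↔ ∀ x ∈ e, x ∈ U := by
  induction e using Sym2.ind with
  | _ x y => simp

namespace ReachE

lemma mono {F F' : Set (Sym2 V)} (h : F ⊆ F') {a b : V} (hab : ReachE F a b) :
    ReachE F' a b :=
  Relation.ReflTransGen.mono (r := fun x y => s(x, y) ∈ F) (fun _ _ hxy => h hxy) a b hab

lemma inter_sym2 {U₁ U₂ : Set V} {v : V} (hmeet : U₁ ∩ U₂ ⊆ {v}) {F : Set (Sym2 V)}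
    (hF : F ⊆ U₁.sym2 ∪ U₂.sym2) {a b : V} (ha : a ∈ U₁) (hb : b ∈ U₁) (hab : ReachE F a b) :
    ReachE (F ∩ U₁.sym2) a b := by
  suffices key : (b ∈ U₁ → ReachE (F ∩ U₁.sym2) a b) ∧ (b ∉ U₁ → ReachE (F ∩ U₁.sym2) a v) from
    key.1 hb
  clear hb
  induction hab with
  | refl => exact ⟨fun _ => .refl, fun h => absurd ha h⟩
  | @tail p q _ hpq ih =>
    rcases hF hpq with hpq₁ | hpq₂
    · have hp : p ∈ U₁ := (Set.mk_mem_sym2_iff.1 hpq₁).1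
      exact ⟨fun _ => (ih.1 hp).tail ⟨hpq, hpq₁⟩,
        fun hq => absurd (Set.mk_mem_sym2_iff.1 hpq₁).2 hq⟩
    · obtain ⟨hp, hq⟩ := Set.mk_mem_sym2_iff.1 hpq₂
      have hav : ReachE (F ∩ U₁.sym2) a v := by
        by_cases hp₁ : p ∈ U₁
        · exact hmeet ⟨hp₁, hp⟩ ▸ ih.1 hp₁
        · exact ih.2 hp₁
      exact ⟨fun hq₁ => hmeet ⟨hq₁, hq⟩ ▸ hav, fun _ => hav⟩

lemma of_union_of_mem_inter {U₁ U₂ : Set V} {v : V} {F : Set (Sym2 V)}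
    (h₁ : ∀ a ∈ U₁, ∀ b ∈ U₁, ReachE F a b) (h₂ : ∀ a ∈ U₂, ∀ b ∈ U₂, ReachE F a b)
    (hv₁ : v ∈ U₁) (hv₂ : v ∈ U₂) {a b : V} (ha : a ∈ U₁ ∪ U₂) (hb : b ∈ U₁ ∪ U₂) :
    ReachE F a b := by
  have hav : ReachE F a v := ha.elim (h₁ a · v hv₁) (h₂ a · v hv₂)
  have hvb : ReachE F v b := hb.elim (h₁ v hv₁ b) (h₂ v hv₂ b)
  exact hav.trans hvb

end ReachE

namespace TwoECWithin

variable {G : SimpleGraph V} {U U₁ U₂ : Set V} {v : V} {F F₁ F₂ : Set (Sym2 V)}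

lemma subset_sym2 (h : TwoECWithin G U F) : F ⊆ U.sym2 :=
  fun e he => Set.mem_sym2_iff_forall.2 (h.2.1 e he)

lemma reachE_diff (h : TwoECWithin G U F) (e : Sym2 V) {a b : V} (ha : a ∈ U) (hb : b ∈ U) :
    ReachE (F \ {e}) a b := by
  by_cases he : e ∈ F
  · exact h.2.2.2 e he a ha b hb
  · rw [Set.sdiff_singleton_eq_self he]
    exact h.2.2.1 a ha b hb

lemma union (h₁ : TwoECWithin G U₁ F₁) (h₂ : TwoECWithin G U₂ F₂) (hv₁ : v ∈ U₁)
    (hv₂ : v ∈ U₂) : TwoECWithin G (U₁ ∪ U₂) (F₁ ∪ F₂) := by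
  refine ⟨Set.union_subset h₁.1 h₂.1, ?_, ?_, ?_⟩
  · rintro e (he | he) x hx
    exacts [.inl (h₁.2.1 e he x hx), .inr (h₂.2.1 e he x hx)]
  · intro a ha b hb
    exact ReachE.of_union_of_mem_inter
      (fun a ha b hb => (h₁.2.2.1 a ha b hb).mono Set.subset_union_left)
      (fun a ha b hb => (h₂.2.2.1 a ha b hb).mono Set.subset_union_right) hv₁ hv₂ ha hb
  · intro e _ a ha b hb
    exact ReachE.of_union_of_mem_inter
      (fun a ha b hb => (h₁.reachE_diff e ha hb).mono (Set.sdiff_subset_sdiff_left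
        Set.subset_union_left))
      (fun a ha b hb => (h₂.reachE_diff e ha hb).mono (Set.sdiff_subset_sdiff_left
        Set.subset_union_right)) hv₁ hv₂ ha hb

lemma inter_sym2 (h : TwoECWithin G U F) (hU₁ : U₁ ⊆ U) (hmeet : U₁ ∩ U₂ ⊆ {v})
    (hF : F ⊆ U₁.sym2 ∪ U₂.sym2) : TwoECWithin G U₁ (F ∩ U₁.sym2) := by
  refine ⟨fun e he => h.1 he.1, fun e he => Set.mem_sym2_iff_forall.1 he.2, ?_, ?_⟩
  · intro a ha b hb
    exact (h.2.2.1 a (hU₁ ha) b (hU₁ hb)).inter_sym2 hmeet hF ha hb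
  · intro e he a ha b hb
    rw [← Set.sdiff_inter_right_comm]
    exact (h.2.2.2 e he.1 a (hU₁ ha) b (hU₁ hb)).inter_sym2 hmeet
      (Set.sdiff_subset.trans hF) ha hb

end TwoECWithin

lemma SimpleGraph.disjoint_inter_sym2 (G : SimpleGraph V) {U₁ U₂ : Set V} {v : V}
    (hmeet : U₁ ∩ U₂ ⊆ {v}) : Disjoint (G.edgeSet ∩ U₁.sym2) U₂.sym2 := by
  rw [Set.disjoint_left]
  rintro e ⟨he, he₁⟩ he₂
  induction e using Sym2.ind with
  | _ x y =>
    obtain ⟨hx₁, hy₁⟩ := Set.mk_mem_sym2_iff.1 he₁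
    obtain ⟨hx₂, hy₂⟩ := Set.mk_mem_sym2_iff.1 he₂
    obtain rfl : x = v := hmeet ⟨hx₁, hx₂⟩
    obtain rfl : y = x := hmeet ⟨hy₁, hy₂⟩
    exact G.irrefl he

lemma SimpleGraph.edgeSet_inter_sym2_union_subset (G : SimpleGraph V) {U₁ U₂ : Set V}
    (hsep : ∀ a ∈ U₁ \ U₂, ∀ b ∈ U₂ \ U₁, ¬ G.Adj a b) :
    G.edgeSet ∩ (U₁ ∪ U₂).sym2 ⊆ U₁.sym2 ∪ U₂.sym2 := by
  rintro e ⟨he, heU⟩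
  induction e using Sym2.ind with
  | _ x y =>
    have hyx : G.Adj y x := G.adj_symm he
    simp only [Set.mk_mem_sym2_iff, Set.mem_union, Set.mem_sdiff] at heU hsep ⊢
    have := hsep x; have := hsep y
    tauto

section optOn

variable {G : SimpleGraph V} {U U₁ U₂ : Set V} {F : Set (Sym2 V)}

lemma optOn_le_ncard (h : TwoECWithin G U F) : optOn G U ≤ F.ncard :=
  Nat.sInf_le ⟨F, h, rfl⟩

lemma exists_twoECWithin_ncard_eq_optOn (h : TwoECWithin G U F) :
    ∃ F', TwoECWithin G U F' ∧ F'.ncard = optOn G U := by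
  have hne : {n | ∃ F, TwoECWithin G U F ∧ F.ncard = n}.Nonempty := ⟨F.ncard, F, h, rfl⟩
  exact Nat.sInf_mem hne

theorem optOn_union_eq_add [Finite V] {v : V} (hv₁ : v ∈ U₁) (hv₂ : v ∈ U₂)
    (hmeet : U₁ ∩ U₂ ⊆ {v}) (hsep : G.edgeSet ∩ (U₁ ∪ U₂).sym2 ⊆ U₁.sym2 ∪ U₂.sym2)
    {F₀ : Set (Sym2 V)} (hF₀ : TwoECWithin G (U₁ ∪ U₂) F₀) :
    optOn G (U₁ ∪ U₂) = optOn G U₁ + optOn G U₂ := by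
  obtain ⟨F, hF, hF_opt⟩ := exists_twoECWithin_ncard_eq_optOn hF₀
  have hF_sub : F ⊆ U₁.sym2 ∪ U₂.sym2 := fun e he => hsep ⟨hF.1 he, hF.subset_sym2 he⟩
  have hF₁ : TwoECWithin G U₁ (F ∩ U₁.sym2) :=
    hF.inter_sym2 Set.subset_union_left hmeet hF_sub
  have hF₂ : TwoECWithin G U₂ (F ∩ U₂.sym2) :=
    hF.inter_sym2 Set.subset_union_right (Set.inter_comm U₁ U₂ ▸ hmeet)
      (Set.union_comm U₁.sym2 _ ▸ hF_sub)
  have hdisj {F₁ F₂ : Set (Sym2 V)} (h₁ : TwoECWithin G U₁ F₁) (h₂ : TwoECWithin G U₂ F₂) :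
      Disjoint F₁ F₂ :=
    (G.disjoint_inter_sym2 hmeet).mono (Set.subset_inter h₁.1 h₁.subset_sym2) h₂.subset_sym2
  apply le_antisymm
  · obtain ⟨F₁, h₁, hc₁⟩ := exists_twoECWithin_ncard_eq_optOn hF₁
    obtain ⟨F₂, h₂, hc₂⟩ := exists_twoECWithin_ncard_eq_optOn hF₂
    calc optOn G (U₁ ∪ U₂) ≤ (F₁ ∪ F₂).ncard := optOn_le_ncard (h₁.union h₂ hv₁ hv₂)
      _ = optOn G U₁ + optOn G U₂ := by rw [Set.ncard_union_eq (hdisj h₁ h₂), hc₁, hc₂]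
  · have hF_split : F ∩ U₁.sym2 ∪ F ∩ U₂.sym2 = F := by
      rw [← Set.inter_union_distrib_left, Set.inter_eq_left.2 hF_sub]
    calc optOn G U₁ + optOn G U₂ ≤ (F ∩ U₁.sym2).ncard + (F ∩ U₂.sym2).ncard :=
          add_le_add (optOn_le_ncard hF₁) (optOn_le_ncard hF₂)
      _ = optOn G (U₁ ∪ U₂) := by rw [← Set.ncard_union_eq (hdisj hF₁ hF₂), hF_split, hF_opt]

end optOn

theorem opt_splits_at_cut_vertex_general [Fintype V] (G : SimpleGraph V)
    (hG : TwoECWithin G Set.univ G.edgeSet)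
    (v : V)
    (V1 V2 : Set V)
    (hpart : V1 ∪ V2 = ({v} : Set V)ᶜ) (hdisj : Disjoint V1 V2)
    (hsep : ∀ a ∈ V1, ∀ b ∈ V2, ¬ G.Adj a b) :
    optOn G Set.univ = optOn G (V1 ∪ {v}) + optOn G (V2 ∪ {v}) := by
  have hmeet : (V1 ∪ {v}) ∩ (V2 ∪ {v}) ⊆ {v} := by
    rw [← Set.inter_union_distrib_right, hdisj.inter_eq, Set.empty_union]
  have hcover : V1 ∪ {v} ∪ (V2 ∪ {v}) = Set.univ := by
    rw [Set.union_union_union_comm, Set.union_self, hpart, Set.compl_union_self]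
  have hsep' : ∀ a ∈ (V1 ∪ {v}) \ (V2 ∪ {v}), ∀ b ∈ (V2 ∪ {v}) \ (V1 ∪ {v}), ¬ G.Adj a b := by
    rintro a ⟨ha | rfl, ha'⟩ b ⟨hb | rfl, hb'⟩
    exacts [hsep a ha b hb, (hb' (.inr rfl)).elim, (ha' (.inr rfl)).elim, (ha' (.inr rfl)).elim]
  rw [← hcover] at hG ⊢
  exact optOn_union_eq_add (.inr rfl) (.inr rfl) hmeet (G.edgeSet_inter_sym2_union_subset hsep') hG

/-- Let `G` be a 2-edge-connected graph, `v` a cut vertex of `G`, and `(V1, V2)` a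
partition of `V(G) \ {v}` with `V1`, `V2` nonempty and no edges between `V1` and `V2`.
Then the minimum size of a 2-edge-connected spanning subgraph of `G` equals the sum of
the minimum sizes of 2-edge-connected spanning subgraphs of `G[V1 ∪ {v}]` and
`G[V2 ∪ {v}]`. -/
theorem opt_splits_at_cut_vertex [Fintype V] (G : SimpleGraph V)
    (hG : TwoECWithin G Set.univ G.edgeSet)
    (v : V)
    (hcut : ∃ a b : V, a ≠ v ∧ b ≠ v ∧
      ¬ Relation.ReflTransGen (fun x y => G.Adj x y ∧ x ≠ v ∧ y ≠ v) a b)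
    (V1 V2 : Set V)
    (hpart : V1 ∪ V2 = ({v} : Set V)ᶜ) (hdisj : Disjoint V1 V2)
    (h1 : V1.Nonempty) (h2 : V2.Nonempty)
    (hsep : ∀ a ∈ V1, ∀ b ∈ V2, ¬ G.Adj a b) :
    optOn G Set.univ = optOn G (V1 ∪ {v}) + optOn G (V2 ∪ {v}) :=
  opt_splits_at_cut_vertex_general G hG v V1 V2 hpart hdisj hsep
end

section
/- Let H be a bridgeless 2-edge cover of a graph G in which every vertex has degree at least 2 in H. Then every connected component of H is 2-edge-connected and contains at least 3 edges; if additionally H is triangle-free (no component is a triangle) and G is simple, every component of H contains at least 4 edges. -/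
/-!
Every edge of `H` meeting a component `C` lies in `C`, so `C` inherits from `H` both
bridgelessness (a walk of `H` that starts in `C` stays in `C`) and minimum degree 2.
In a loopless edge set of minimum degree 2, every edge `xy` extends to a path `c x y d`
of three distinct edges; if there are only three edges, `c` needs a second edge,
which can only be `yd`, so `c = d` and the component is a triangle.
-/

variable {V : Type*}

/-- The set of vertices incident to at least one edge of `F`. -/
def eSupport (F : Set (Sym2 V)) : Set V :=
  {v | ∃ e ∈ F, v ∈ e}

/-- The edge set `F` is connected (as a graph on its support). -/
def ConnSet (F : Set (Sym2 V)) : Prop :=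
  ∀ a ∈ eSupport F, ∀ b ∈ eSupport F, ReachE F a b

/-- The edge set `F` is a 2-edge-connected subgraph (on its support):
connected and bridgeless. -/
def TwoECSet (F : Set (Sym2 V)) : Prop :=
  ConnSet F ∧ ∀ a b : V, s(a, b) ∈ F → ReachE (F \ {s(a, b)}) a b

/-- `C` is (the edge set of) a connected component of the edge set `F`. -/
def IsComponent (F C : Set (Sym2 V)) : Prop :=
  C.Nonempty ∧ C ⊆ F ∧ ConnSet C ∧
    ∀ e ∈ F, e ∉ C → ∀ v ∈ e, v ∉ eSupport C

/-- The connected component of `F` containing `a`, `b`, `c` is a triangle. -/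
def IsTriangleComp (F : Set (Sym2 V)) (a b c : V) : Prop :=
  a ≠ b ∧ b ≠ c ∧ a ≠ c ∧ s(a, b) ∈ F ∧ s(b, c) ∈ F ∧ s(a, c) ∈ F ∧
    ∀ e ∈ F, (a ∈ e ∨ b ∈ e ∨ c ∈ e) → e = s(a, b) ∨ e = s(b, c) ∨ e = s(a, c)


lemma mem_eSupport_of_mem {F : Set (Sym2 V)} {e : Sym2 V} {v : V} (he : e ∈ F) (hv : v ∈ e) :
    v ∈ eSupport F :=
  ⟨e, he, hv⟩

namespace IsComponent

variable {F C : Set (Sym2 V)}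

lemma mem_of_mem_eSupport (hC : IsComponent F C) {e : Sym2 V} {v : V} (he : e ∈ F)
    (hv : v ∈ e) (hvC : v ∈ eSupport C) : e ∈ C := by
  by_contra heC
  exact hC.2.2.2 e he heC v hv hvC

lemma incidence_eq (hC : IsComponent F C) {v : V} (hv : v ∈ eSupport C) :
    {e ∈ F | v ∈ e} = {e ∈ C | v ∈ e} :=
  Set.ext fun _ => ⟨fun h => ⟨hC.mem_of_mem_eSupport h.1 h.2 hv, h.2⟩,
    fun h => ⟨hC.2.1 h.1, h.2⟩⟩

lemma reachE_diff (hC : IsComponent F C) (S : Set (Sym2 V)) {a b : V}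
    (ha : a ∈ eSupport C) (h : ReachE (F \ S) a b) : ReachE (C \ S) a b := by
  suffices ReachE (C \ S) a b ∧ b ∈ eSupport C from this.1
  induction h with
  | refl => exact ⟨.refl, ha⟩
  | @tail c d _ hcd ih =>
    have hmem : s(c, d) ∈ C := hC.mem_of_mem_eSupport hcd.1 (Sym2.mem_mk_left c d) ih.2
    exact ⟨ih.1.tail ⟨hmem, hcd.2⟩, mem_eSupport_of_mem hmem (Sym2.mem_mk_right c d)⟩

lemma twoECSet (hC : IsComponent F C)
    (hF : ∀ a b : V, s(a, b) ∈ F → ReachE (F \ {s(a, b)}) a b) : TwoECSet C :=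
  ⟨hC.2.2.1, fun a b hab =>
    hC.reachE_diff _ (mem_eSupport_of_mem hab (Sym2.mem_mk_left a b)) (hF a b (hC.2.1 hab))⟩

lemma isTriangleComp (hC : IsComponent F C) {a b c : V} (hab : a ≠ b) (hbc : b ≠ c)
    (hac : a ≠ c) (hCeq : C = {s(a, b), s(b, c), s(a, c)}) : IsTriangleComp F a b c := by
  subst hCeq
  refine ⟨hab, hbc, hac, hC.2.1 (by simp), hC.2.1 (by simp), hC.2.1 (by simp), ?_⟩
  intro e he hv
  rcases hv with hv | hv | hv
  · simpa using hC.mem_of_mem_eSupport he hv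
      (mem_eSupport_of_mem (by simp) (Sym2.mem_mk_left a b))
  · simpa using hC.mem_of_mem_eSupport he hv
      (mem_eSupport_of_mem (by simp) (Sym2.mem_mk_left b c))
  · simpa using hC.mem_of_mem_eSupport he hv
      (mem_eSupport_of_mem (by simp) (Sym2.mem_mk_right b c))

end IsComponent

section MinDegreeTwo

variable {C : Set (Sym2 V)}

lemma exists_path_of_mem (hloop : ∀ e ∈ C, ¬e.IsDiag)
    (hdeg : ∀ v ∈ eSupport C, 2 ≤ {e ∈ C | v ∈ e}.ncard) {x y : V} (hxy : s(x, y) ∈ C) :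
    ∃ c d, s(x, c) ∈ C ∧ s(y, d) ∈ C ∧
      s(x, y) ≠ s(x, c) ∧ s(x, y) ≠ s(y, d) ∧ s(x, c) ≠ s(y, d) := by
  have hother : ∀ v ∈ (s(x, y) : Sym2 V), ∃ f ∈ C, v ∈ f ∧ f ≠ s(x, y) := fun v hv => by
    obtain ⟨f, ⟨hfC, hvf⟩, hf⟩ :=
      Set.exists_ne_of_one_lt_ncard (hdeg v (mem_eSupport_of_mem hxy hv)) s(x, y)
    exact ⟨f, hfC, hvf, hf⟩
  obtain ⟨f, hfC, hxf, hf⟩ := hother x (Sym2.mem_mk_left x y)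
  obtain ⟨g, hgC, hyg, hg⟩ := hother y (Sym2.mem_mk_right x y)
  obtain ⟨c, rfl⟩ := Sym2.mem_iff_exists.mp hxf
  obtain ⟨d, rfl⟩ := Sym2.mem_iff_exists.mp hyg
  have hxy' : x ≠ y := fun h => hloop _ hxy (Sym2.mk_isDiag_iff.mpr h)
  refine ⟨c, d, hfC, hgC, hf.symm, hg.symm, fun hfg => hf ?_⟩
  exact (Sym2.mem_and_mem_iff hxy').mp ⟨Sym2.mem_mk_left x c, hfg ▸ Sym2.mem_mk_left y d⟩

lemma three_le_ncard_of_two_le_degree (hfin : C.Finite) (hne : C.Nonempty)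
    (hloop : ∀ e ∈ C, ¬e.IsDiag) (hdeg : ∀ v ∈ eSupport C, 2 ≤ {e ∈ C | v ∈ e}.ncard) :
    3 ≤ C.ncard := by
  obtain ⟨e, he⟩ := hne
  induction e using Sym2.ind with
  | _ x y =>
    obtain ⟨c, d, hxc, hyd, hxy_xc, hxy_yd, hxc_yd⟩ := exists_path_of_mem hloop hdeg he
    calc 3 = ({s(x, y), s(x, c), s(y, d)} : Set (Sym2 V)).ncard :=
          (Set.ncard_eq_three.mpr ⟨_, _, _, hxy_xc, hxy_yd, hxc_yd, rfl⟩).symm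
      _ ≤ C.ncard := Set.ncard_le_ncard (by simp [Set.insert_subset_iff, *]) hfin

lemma exists_eq_triangle_of_ncard_eq_three (h3 : C.ncard = 3)
    (hloop : ∀ e ∈ C, ¬e.IsDiag) (hdeg : ∀ v ∈ eSupport C, 2 ≤ {e ∈ C | v ∈ e}.ncard) :
    ∃ a b c : V, a ≠ b ∧ b ≠ c ∧ a ≠ c ∧ C = {s(a, b), s(b, c), s(a, c)} := by
  obtain ⟨e, he⟩ := Set.nonempty_of_ncard_ne_zero (by omega : C.ncard ≠ 0)
  induction e using Sym2.ind with
  | _ x y =>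
    obtain ⟨c, d, hxcC, hydC, hxy_xc, hxy_yd, hxc_yd⟩ := exists_path_of_mem hloop hdeg he
    have hCeq : C = {s(x, y), s(x, c), s(y, d)} :=
      (Set.eq_of_subset_of_ncard_le (by simp [Set.insert_subset_iff, *])
        (by rw [h3, Set.ncard_eq_three.mpr ⟨_, _, _, hxy_xc, hxy_yd, hxc_yd, rfl⟩])
        (Set.finite_of_ncard_ne_zero (by omega))).symm
    have hxy : x ≠ y := fun h => hloop _ he (Sym2.mk_isDiag_iff.mpr h)
    have hxc : x ≠ c := fun h => hloop _ hxcC (Sym2.mk_isDiag_iff.mpr h)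
    have hcy : c ≠ y := by rintro rfl; exact hxy_xc rfl
    obtain ⟨f, ⟨hfC, hcf⟩, hf⟩ := Set.exists_ne_of_one_lt_ncard
      (hdeg c (mem_eSupport_of_mem hxcC (Sym2.mem_mk_right x c))) s(x, c)
    have hcd : c = d := by
      rw [hCeq] at hfC
      rcases hfC with rfl | rfl | rfl
      · rcases Sym2.mem_iff.mp hcf with h | h
        exacts [absurd h.symm hxc, absurd h hcy]
      · exact absurd rfl hf
      · exact (Sym2.mem_iff.mp hcf).resolve_left hcy
    subst hcd
    refine ⟨x, y, c, hxy, hcy.symm, hxc, ?_⟩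
    rw [hCeq, Set.pair_comm]

end MinDegreeTwo

/-- Let `H` be a bridgeless 2-edge cover of a (simple) graph `G` in which every vertex
has degree at least 2.  Then every connected component of `H` is 2-edge-connected and
contains at least 3 edges; if additionally `H` is triangle-free (no component is a
triangle), every component of `H` contains at least 4 edges. -/
theorem bridgeless_cover_components [Fintype V] (G : SimpleGraph V)
    (H : Set (Sym2 V)) (hHG : H ⊆ G.edgeSet)
    (hcover : ∀ v : V, 2 ≤ {e ∈ H | v ∈ e}.ncard)
    (hbridgeless : ∀ a b : V, s(a, b) ∈ H → ReachE (H \ {s(a, b)}) a b) :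
    ∀ C : Set (Sym2 V), IsComponent H C →
      (TwoECSet C ∧ 3 ≤ C.ncard) ∧
        ((¬ ∃ a b c : V, IsTriangleComp H a b c) → 4 ≤ C.ncard) := by
  intro C hC
  have hloop : ∀ e ∈ C, ¬e.IsDiag := fun e he => G.not_isDiag_of_mem_edgeSet (hHG (hC.2.1 he))
  have hdeg : ∀ v ∈ eSupport C, 2 ≤ {e ∈ C | v ∈ e}.ncard := fun v hv =>
    hC.incidence_eq hv ▸ hcover v
  have h3 : 3 ≤ C.ncard := three_le_ncard_of_two_le_degree C.toFinite hC.1 hloop hdeg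
  refine ⟨⟨hC.twoECSet hbridgeless, h3⟩, fun hnoTri => ?_⟩
  by_contra h4
  obtain ⟨a, b, c, hab, hbc, hac, hCeq⟩ :=
    exists_eq_triangle_of_ncard_eq_three (by omega) hloop hdeg
  exact hnoTri ⟨a, b, c, hC.isTriangleComp hab hbc hac hCeq⟩
end
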